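/- For every a ∈ ℚ_q, if a_i ∈ 𝔽_q denotes the reduction mod p of Ψ_q(p^{−i} a) ∈ ℤ_q, then a = Σ_{i ≫ −∞} [a_i] p^i, where [·] denotes the Teichmüller lift 𝔽_q → ℤ_q; i.e., the a_i are the Witt/Teichmüller digits of a. -/

import Mathlib

/-!
The identity defining `Ψ` is the recursion `c_n = -∑_{j ≥ 1} p^{j(n-1)} [T^n] Ψ^{q^j}` for its
coefficients, which bounds `v_p(c_n) - k n` from below for every `k`. Hence the double series
obtained by expanding `∑_j p^{-j} Ψ(p^j x)^{q^j}` converges absolutely in `K`, and summing it by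
columns gives the functional equation `x = ∑_j p^{-j} Ψ(p^j x)^{q^j}` for every `x ∈ K`.

If `[c] ≡ Ψ(p^j x) mod p` with `[c]^q = [c]`, then `Ψ(p^j x)^{q^j} ≡ [c] mod p^{fj+1}`, so the
`j`-th term of the functional equation is `p^{-j}[c]` mod `p`; if moreover `p^n x` is integral,
the terms with `j > n` vanish mod `p`. Applied to `x = p^{-n} a` with `a` integral this is
`a ≡ ∑_{i ≤ n} [a_i] p^i mod p^{n+1}`.
-/

open PowerSeries

/-- `Ψ ∈ T + T²ℤ[[T]]` satisfies `∑_{j≥0} p^{-j} Ψ(p^j T)^{q^j} = T` (coefficientwise). -/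
def IsPsi (p q : ℕ) (Ψ : PowerSeries ℤ) : Prop :=
  PowerSeries.constantCoeff Ψ = 0 ∧ PowerSeries.coeff 1 Ψ = 1 ∧
  ∀ n : ℕ,
    (∑ j ∈ Finset.range (n + 1),
      ((p : ℚ) ^ j)⁻¹ *
        PowerSeries.coeff n
          ((PowerSeries.rescale ((p : ℚ) ^ j) (Ψ.map (Int.castRingHom ℚ))) ^ (q ^ j)))
      = PowerSeries.coeff n (PowerSeries.X : PowerSeries ℚ)

/-- Evaluation of the entire function defined by an integral power series at a point of a
complete nonarchimedean field. -/
noncomputable def psiEval (Ψ : PowerSeries ℤ) {K : Type} [NormedField K] (x : K) : K :=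
  ∑' i : ℕ, ((PowerSeries.coeff i Ψ : ℤ) : K) * x ^ i

open Finset Filter

section AdicEntire

variable {R : Type*} [CommRing R]

/-- `π`-adic entireness: `v_π (c_n) ≥ k n - D_k` for every `k`. -/
def IsAdicEntire (π : R) (Φ : R⟦X⟧) : Prop :=
  ∀ k : ℕ, ∃ D : ℕ, ∀ n : ℕ, π ^ (k * n) ∣ π ^ D * coeff n Φ

theorem dvd_coeff_pow {π : R} {Φ : R⟦X⟧} {k D : ℕ}
    (h : ∀ n, π ^ (k * n) ∣ π ^ D * coeff n Φ) (m n : ℕ) :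
    π ^ (k * n) ∣ π ^ (D * m) * coeff n (Φ ^ m) := by
  induction m generalizing n with
  | zero => rw [pow_zero, coeff_one]; split_ifs with hn <;> simp [hn]
  | succ m ih =>
    rw [pow_succ, coeff_mul, mul_sum]
    refine dvd_sum fun ab hab => ?_
    rw [← mem_antidiagonal.mp hab, mul_add, pow_add,
      show π ^ (D * (m + 1)) * (coeff ab.1 (Φ ^ m) * coeff ab.2 Φ)
        = π ^ (D * m) * coeff ab.1 (Φ ^ m) * (π ^ D * coeff ab.2 Φ) by ring]
    exact mul_dvd_mul (ih _) (h _)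

theorem IsAdicEntire.pow {π : R} {Φ : R⟦X⟧} (hΦ : IsAdicEntire π Φ) (m : ℕ) :
    IsAdicEntire π (Φ ^ m) := fun k =>
  (hΦ k).elim fun D hD => ⟨D * m, dvd_coeff_pow hD m⟩

theorem coeff_pow_eq_zero_of_lt {Φ : R⟦X⟧} (h : constantCoeff Φ = 0) {m n : ℕ} (hnm : n < m) :
    coeff n (Φ ^ m) = 0 :=
  X_pow_dvd_iff.mp (pow_dvd_pow_of_dvd (X_dvd_iff.mpr h) m) n hnm

end AdicEntire

theorem pow_dvd_pow_mul_of_add_le {M : Type*} [CommMonoidWithZero M] [IsCancelMulZero M]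
    {π m : M} (hπ : π ≠ 0) {a b a' b' : ℕ} (h : π ^ a ∣ π ^ b * m) (hle : a' + b ≤ a + b') :
    π ^ a' ∣ π ^ b' * m := by
  rw [← mul_dvd_mul_iff_left (pow_ne_zero b hπ), ← pow_add, mul_left_comm]
  calc π ^ (b + a') ∣ π ^ b' * π ^ a := by rw [← pow_add]; exact pow_dvd_pow _ (by omega)
    _ ∣ π ^ b' * (π ^ b * m) := mul_dvd_mul_left _ h

theorem two_mul_le_pow {q : ℕ} (hq : 2 ≤ q) (j : ℕ) : 2 * j ≤ q ^ j := by
  rcases j with _ | j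
  · simp
  · calc 2 * (j + 1) ≤ 2 * 2 ^ j := by have := Nat.lt_two_pow_self (n := j); omega
      _ = 2 ^ (j + 1) := by ring
      _ ≤ q ^ (j + 1) := Nat.pow_le_pow_left hq _

theorem mul_pow_add_two_mul_le {q : ℕ} (hq : 2 ≤ q) (D j : ℕ) :
    D * q ^ j + 2 * j ≤ D * (q ^ D + 2) + j * q ^ j := by
  rcases le_or_gt j D with hj | hj
  · have := Nat.mul_le_mul_left D (Nat.pow_le_pow_right (by omega : 0 < q) hj)
    nlinarith [Nat.zero_le (j * q ^ j)]
  · have := Nat.mul_le_mul_right (q ^ j) (hj : D + 1 ≤ j)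
    have := two_mul_le_pow hq j
    nlinarith [Nat.zero_le (D * (q ^ D + 2))]

section IsPsi

variable {p q : ℕ} {Ψ : ℤ⟦X⟧}

theorem IsPsi.sum_coeff_pow (hp : p ≠ 0) (hΨ : IsPsi p q Ψ) (n : ℕ) :
    ∑ j ∈ range (n + 1), (p : ℤ) ^ (j * (n - 1)) * coeff n (Ψ ^ q ^ j)
      = if n = 1 then 1 else 0 := by
  rcases n with _ | n
  · simp [hΨ.1]
  refine Int.cast_injective (α := ℚ) ?_
  have hX : ((if n + 1 = 1 then 1 else 0 : ℤ) : ℚ) = coeff (n + 1) (X : ℚ⟦X⟧) := by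
    rw [coeff_X]; split_ifs <;> simp
  rw [Int.cast_sum, hX, ← hΨ.2.2]
  refine sum_congr rfl fun j _ => ?_
  rw [← map_pow, ← map_pow, coeff_rescale, coeff_map, eq_intCast, Int.cast_mul, Int.cast_pow,
    Int.cast_natCast, Nat.add_sub_cancel]
  have : (p : ℚ) ≠ 0 := by exact_mod_cast hp
  field_simp
  ring

theorem IsPsi.coeff_eq_neg_sum (hp : p ≠ 0) (hΨ : IsPsi p q Ψ) {n : ℕ} (hn : 2 ≤ n) :
    coeff n Ψ = -∑ j ∈ range n, (p : ℤ) ^ ((j + 1) * (n - 1)) * coeff n (Ψ ^ q ^ (j + 1)) := by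
  have h := hΨ.sum_coeff_pow hp n
  rw [sum_range_succ', if_neg (by omega)] at h
  simp only [zero_mul, pow_zero, one_mul, pow_one] at h
  linarith

theorem IsPsi.isAdicEntire (hp : p ≠ 0) (hq : 2 ≤ q) (hΨ : IsPsi p q Ψ) :
    IsAdicEntire (p : ℤ) Ψ := by
  intro k
  induction k with
  | zero => exact ⟨0, fun n => by simp⟩
  | succ k ih =>
    obtain ⟨D, hD⟩ := ih
    refine ⟨(D + 1) * (q ^ (D + 1) + 2) + k + 1, fun n => ?_⟩
    obtain rfl | rfl | hn : n = 0 ∨ n = 1 ∨ 2 ≤ n := by omega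
    · simp [hΨ.1]
    · rw [hΨ.2.1, mul_one, mul_one]
      exact pow_dvd_pow _ (by omega)
    rw [hΨ.coeff_eq_neg_sum hp hn, mul_neg, dvd_neg, mul_sum]
    refine dvd_sum fun j _ => ?_
    rcases lt_or_ge n (q ^ (j + 1)) with hlt | hge
    · simp [coeff_pow_eq_zero_of_lt hΨ.1 hlt]
    rw [← mul_assoc, ← pow_add]
    refine pow_dvd_pow_mul_of_add_le (by exact_mod_cast hp) (dvd_coeff_pow hD _ n) ?_
    have := mul_pow_add_two_mul_le hq (D + 1) (j + 1)
    obtain ⟨n, rfl⟩ : ∃ n', n = n' + 1 := ⟨n - 1, by omega⟩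
    rw [Nat.add_sub_cancel]
    nlinarith

theorem IsPsi.exists_dvd_coeff_pow_pow (hp : p ≠ 0) (hq : 2 ≤ q) (hΨ : IsPsi p q Ψ) (k : ℕ) :
    ∃ C : ℕ, ∀ j i : ℕ,
      (p : ℤ) ^ (k * i + j) ∣ (p : ℤ) ^ C * ((p : ℤ) ^ (j * (i - 1)) * coeff i (Ψ ^ q ^ j)) := by
  obtain ⟨D, hD⟩ := hΨ.isAdicEntire hp hq k
  refine ⟨D * (q ^ D + 2), fun j i => ?_⟩
  rcases lt_or_ge i (q ^ j) with hlt | hge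
  · simp [coeff_pow_eq_zero_of_lt hΨ.1 hlt]
  rw [← mul_assoc, ← pow_add]
  refine pow_dvd_pow_mul_of_add_le (by exact_mod_cast hp) (dvd_coeff_pow hD _ i) ?_
  have := mul_pow_add_two_mul_le hq D j
  obtain ⟨i, rfl⟩ : ∃ i', i = i' + 1 := ⟨i - 1, by have := Nat.one_le_pow j q (by omega); omega⟩
  rw [Nat.add_sub_cancel]
  nlinarith

end IsPsi

section Analysis

variable {K : Type} [NormedField K]

theorem exists_norm_pow_mul_le_one {a : K} (ha : ‖a‖ < 1) (x : K) : ∃ M : ℕ, ‖a ^ M * x‖ ≤ 1 := by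
  rcases eq_or_ne x 0 with rfl | hx
  · exact ⟨0, by simp⟩
  obtain ⟨M, hM⟩ := exists_pow_lt_of_lt_one (inv_pos.mpr (norm_pos_iff.mpr hx)) ha
  refine ⟨M, ?_⟩
  calc ‖a ^ M * x‖ = ‖a‖ ^ M * ‖x‖ := by rw [norm_mul, norm_pow]
    _ ≤ ‖x‖⁻¹ * ‖x‖ := by gcongr
    _ = 1 := inv_mul_cancel₀ (norm_ne_zero_iff.mpr hx)

theorem psiEval_one (x : K) : psiEval 1 x = 1 := by
  rw [psiEval, tsum_eq_single 0 fun i hi => by simp [coeff_one, hi]]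
  simp

theorem psiEval_mul [CompleteSpace K] {Φ Ψ : ℤ⟦X⟧} {x : K}
    (hΦ : Summable fun i => ‖((coeff i Φ : ℤ) : K) * x ^ i‖)
    (hΨ : Summable fun i => ‖((coeff i Ψ : ℤ) : K) * x ^ i‖) :
    psiEval (Φ * Ψ) x = psiEval Φ x * psiEval Ψ x := by
  rw [psiEval, psiEval, psiEval, tsum_mul_tsum_eq_tsum_sum_antidiagonal_of_summable_norm hΦ hΨ]
  refine tsum_congr fun n => ?_
  rw [coeff_mul, Int.cast_sum, sum_mul]
  refine sum_congr rfl fun ab hab => ?_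
  rw [← mem_antidiagonal.mp hab, pow_add]
  push_cast
  ring

theorem norm_le_one_of_pow_eq_self {c : K} {q : ℕ} (hq : 2 ≤ q) (hc : c ^ q = c) : ‖c‖ ≤ 1 := by
  by_contra! h
  have := pow_lt_pow_right₀ h (by omega : 1 < q)
  rw [pow_one, ← norm_pow, hc] at this
  exact this.false

theorem norm_inv_pow_mul_le {a w : K} {j : ℕ} (hw : ‖w‖ ≤ ‖a‖ ^ (j + 1)) :
    ‖(a ^ j)⁻¹ * w‖ ≤ ‖a‖ := by
  rw [norm_mul, norm_inv, norm_pow, inv_mul_eq_div]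
  exact div_le_of_le_mul₀ (by positivity) (norm_nonneg _) (by rwa [← pow_succ'])

variable [IsUltrametricDist K]

theorem norm_intCast_mul_le_of_dvd {π m : ℤ} {s t : ℕ} (h : π ^ t ∣ π ^ s * m) :
    ‖(π : K)‖ ^ s * ‖(m : K)‖ ≤ ‖(π : K)‖ ^ t := by
  obtain ⟨u, hu⟩ := h
  have := congrArg (fun z : ℤ => ‖(z : K)‖) hu
  simp only [Int.cast_mul, Int.cast_pow, norm_mul, norm_pow] at this
  rw [this]
  exact mul_le_of_le_one_right (by positivity) (IsUltrametricDist.norm_intCast_le_one K u)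

theorem norm_intCast_mul_pow_le_of_dvd {p : ℕ} (hp0 : (p : K) ≠ 0) {m : ℤ} {x : K} {M C i j : ℕ}
    (hm : (p : ℤ) ^ ((M + 1) * i + j) ∣ (p : ℤ) ^ C * m) (hx : ‖(p : K) ^ M * x‖ ≤ 1) :
    ‖(m : K) * x ^ i‖ ≤ (‖(p : K)‖ ^ C)⁻¹ * ‖(p : K)‖ ^ (i + j) := by
  have hρ : 0 < ‖(p : K)‖ ^ C := pow_pos (norm_pos_iff.mpr hp0) C
  have hm' := norm_intCast_mul_le_of_dvd (K := K) hm
  rw [Int.cast_natCast] at hm'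
  rw [le_inv_mul_iff₀ hρ, norm_mul, norm_pow, ← mul_assoc]
  rw [norm_mul, norm_pow] at hx
  calc ‖(p : K)‖ ^ C * ‖(m : K)‖ * ‖x‖ ^ i ≤ ‖(p : K)‖ ^ ((M + 1) * i + j) * ‖x‖ ^ i := by gcongr
    _ = ‖(p : K)‖ ^ (i + j) * (‖(p : K)‖ ^ M * ‖x‖) ^ i := by ring
    _ ≤ ‖(p : K)‖ ^ (i + j) * 1 := by gcongr; exact pow_le_one₀ (by positivity) hx
    _ = ‖(p : K)‖ ^ (i + j) := mul_one _

theorem IsAdicEntire.summable_norm {p : ℕ} {Φ : ℤ⟦X⟧} (hΦ : IsAdicEntire (p : ℤ) Φ)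
    (hp0 : (p : K) ≠ 0) (hp1 : ‖(p : K)‖ < 1) (x : K) :
    Summable fun i => ‖((coeff i Φ : ℤ) : K) * x ^ i‖ := by
  obtain ⟨M, hM⟩ := exists_norm_pow_mul_le_one hp1 x
  obtain ⟨D, hD⟩ := hΦ (M + 1)
  refine .of_nonneg_of_le (fun _ => norm_nonneg _) (fun i => ?_)
    ((summable_geometric_of_lt_one (norm_nonneg _) hp1).mul_left (‖(p : K)‖ ^ D)⁻¹)
  simpa using norm_intCast_mul_pow_le_of_dvd (j := 0) hp0 (by simpa using hD i) hM

theorem IsAdicEntire.psiEval_pow [CompleteSpace K] {p : ℕ} {Φ : ℤ⟦X⟧}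
    (hΦ : IsAdicEntire (p : ℤ) Φ) (hp0 : (p : K) ≠ 0) (hp1 : ‖(p : K)‖ < 1) (x : K) (m : ℕ) :
    psiEval (Φ ^ m) x = psiEval Φ x ^ m := by
  induction m with
  | zero => simp [psiEval_one]
  | succ m ih =>
    rw [pow_succ, psiEval_mul ((hΦ.pow m).summable_norm hp0 hp1 x) (hΦ.summable_norm hp0 hp1 x),
      ih, pow_succ]

theorem norm_psiEval_le {Φ : ℤ⟦X⟧} (h0 : constantCoeff Φ = 0) {y : K} (hy : ‖y‖ ≤ 1) :
    ‖psiEval Φ y‖ ≤ ‖y‖ := by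
  refine IsUltrametricDist.norm_tsum_le_of_forall_le_of_nonneg (norm_nonneg y) fun i => ?_
  rcases i with _ | i
  · simp [h0]
  rw [norm_mul, norm_pow]
  calc ‖((coeff (i + 1) Φ : ℤ) : K)‖ * ‖y‖ ^ (i + 1) ≤ 1 * ‖y‖ :=
        mul_le_mul (IsUltrametricDist.norm_intCast_le_one K _)
          (pow_le_of_le_one (norm_nonneg y) hy (by omega)) (by positivity) zero_le_one
    _ = ‖y‖ := one_mul _

variable {p q : ℕ} {Ψ : ℤ⟦X⟧}

/-- The `j`-th row of this double series sums to `p^{-j} Ψ(p^j x)^{q^j}`. -/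
theorem IsPsi.summable_coeff_pow_mul_pow [CompleteSpace K] (hq : 2 ≤ q) (hΨ : IsPsi p q Ψ)
    (hp0 : (p : K) ≠ 0) (hp1 : ‖(p : K)‖ < 1) (x : K) :
    Summable fun ji : ℕ × ℕ =>
      (((p : ℤ) ^ (ji.1 * (ji.2 - 1)) * coeff ji.2 (Ψ ^ q ^ ji.1) : ℤ) : K) * x ^ ji.2 := by
  have hp : p ≠ 0 := by rintro rfl; exact hp0 Nat.cast_zero
  obtain ⟨M, hM⟩ := exists_norm_pow_mul_le_one hp1 x
  obtain ⟨C, hC⟩ := hΨ.exists_dvd_coeff_pow_pow hp hq (M + 1)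
  have hgeom := summable_geometric_of_lt_one (norm_nonneg _) hp1
  refine Summable.of_norm_bounded
    (((hgeom.mul_of_nonneg hgeom (fun _ => by positivity) fun _ => by positivity)).mul_left
      (‖(p : K)‖ ^ C)⁻¹) fun ⟨j, i⟩ => ?_
  have := norm_intCast_mul_pow_le_of_dvd hp0 (hC j i) hM
  rwa [pow_add, mul_comm (_ ^ i)] at this

theorem IsPsi.hasSum_psiEval [CompleteSpace K] (hq : 2 ≤ q) (hΨ : IsPsi p q Ψ)
    (hp0 : (p : K) ≠ 0) (hp1 : ‖(p : K)‖ < 1) (x : K) :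
    HasSum (fun j : ℕ => ((p : K) ^ j)⁻¹ * psiEval Ψ ((p : K) ^ j * x) ^ q ^ j) x := by
  have hp : p ≠ 0 := by rintro rfl; exact hp0 Nat.cast_zero
  set g : ℕ × ℕ → K := fun ji =>
    (((p : ℤ) ^ (ji.1 * (ji.2 - 1)) * coeff ji.2 (Ψ ^ q ^ ji.1) : ℤ) : K) * x ^ ji.2 with hg
  have hsum := (hΨ.summable_coeff_pow_mul_pow hq hp0 hp1 x).hasSum
  have hrow (j : ℕ) :
      HasSum (fun i => g (j, i)) (((p : K) ^ j)⁻¹ * psiEval Ψ ((p : K) ^ j * x) ^ q ^ j) := by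
    have hgji (i : ℕ) :
        g (j, i) = ((p : K) ^ j)⁻¹ * (((coeff i (Ψ ^ q ^ j) : ℤ) : K) * ((p : K) ^ j * x) ^ i) := by
      rcases i with _ | i
      · simp [hg, coeff_pow_eq_zero_of_lt hΨ.1 (pow_pos (by omega : 0 < q) j)]
      simp only [hg, Int.cast_mul, Int.cast_pow, Int.cast_natCast, Nat.add_sub_cancel]
      field_simp
      ring
    rw [← (hΨ.isAdicEntire hp hq).psiEval_pow hp0 hp1]
    simp only [hgji]
    exact ((((hΨ.isAdicEntire hp hq).pow _).summable_norm hp0 hp1 _).of_norm.hasSum).mul_left _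
  have hcol (i : ℕ) : HasSum (fun j => g (j, i)) (if i = 1 then x else 0) := by
    have hvanish : ∀ j ∉ range (i + 1), g (j, i) = 0 := fun j hj => by
      have : i < q ^ j := (Nat.lt_two_pow_self.trans_le' (by simp at hj; omega)).trans_le
        (Nat.pow_le_pow_left hq j)
      simp [hg, coeff_pow_eq_zero_of_lt hΨ.1 this]
    have hval : ∑ j ∈ range (i + 1), g (j, i) = if i = 1 then x else 0 := by
      simp only [hg, ← sum_mul, ← Int.cast_sum, hΨ.sum_coeff_pow hp]
      split_ifs with hi <;> simp [hi]
    exact hval ▸ hasSum_sum_of_ne_finset_zero hvanish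
  have hcols := ((Equiv.prodComm ℕ ℕ).hasSum_iff.2 hsum).prod_fiberwise hcol
  have hrows := hsum.prod_fiberwise hrow
  rwa [hcols.unique (hasSum_ite_eq 1 x)] at hrows

theorem norm_pow_pow_sub_pow_pow_le (p : ℕ) {u v : K} (hu : ‖u‖ ≤ 1) (hv : ‖v‖ ≤ 1)
    (huv : ‖u - v‖ ≤ ‖(p : K)‖) (s : ℕ) :
    ‖u ^ p ^ s - v ^ p ^ s‖ ≤ ‖(p : K)‖ ^ (s + 1) := by
  rcases eq_or_ne (p : K) 0 with hp0 | hp0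
  · rw [hp0, norm_zero, norm_le_zero_iff, sub_eq_zero] at huv
    simp [huv]
  let O := (NormedField.valuation (K := K)).integer
  have hO {y : K} : y ∈ O ↔ ‖y‖ ≤ 1 := by
    rw [Valuation.mem_integer_iff, NormedField.valuation_apply, ← NNReal.coe_le_coe, coe_nnnorm,
      NNReal.coe_one]
  have hdiv : ‖(u - v) / p‖ ≤ 1 := by
    rw [norm_div]; exact div_le_one_of_le₀ huv (norm_nonneg _)
  have hdvd : ((p : O) : O) ∣ ⟨u, hO.2 hu⟩ - ⟨v, hO.2 hv⟩ :=
    ⟨⟨(u - v) / p, hO.2 hdiv⟩, Subtype.ext (by push_cast; field_simp)⟩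
  obtain ⟨z, hz⟩ := dvd_sub_pow_of_dvd_sub hdvd s
  have := congrArg (fun y : O => ‖(y : K)‖) hz
  push_cast at this
  rw [this, norm_mul, norm_pow]
  exact mul_le_of_le_one_right (by positivity) (hO.1 z.2)

theorem norm_pow_pow_sub_le_of_pow_eq_self {p f : ℕ} (hp : 2 ≤ p) (hf : 0 < f)
    (hp1 : ‖(p : K)‖ ≤ 1) {c y : K} (hc : c ^ p ^ f = c) (hcy : ‖c - y‖ ≤ ‖(p : K)‖) (j : ℕ) :
    ‖y ^ (p ^ f) ^ j - c‖ ≤ ‖(p : K)‖ ^ (j + 1) := by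
  have hc1 := norm_le_one_of_pow_eq_self (hp.trans (Nat.le_self_pow hf.ne' p)) hc
  have hy1 : ‖y‖ ≤ 1 := by
    have := dist_triangle_max y c 0
    rw [dist_zero_right, dist_zero_right, dist_eq_norm, norm_sub_rev] at this
    exact this.trans (max_le (hcy.trans hp1) hc1)
  have hcj : c ^ (p ^ f) ^ j = c := by
    simpa [pow_iterate] using Function.iterate_fixed (f := fun z : K => z ^ p ^ f) hc j
  calc ‖y ^ (p ^ f) ^ j - c‖ = ‖y ^ p ^ (f * j) - c ^ p ^ (f * j)‖ := by rw [pow_mul, hcj]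
    _ ≤ ‖(p : K)‖ ^ (f * j + 1) :=
      norm_pow_pow_sub_pow_pow_le p hy1 hc1 (by rwa [norm_sub_rev]) _
    _ ≤ ‖(p : K)‖ ^ (j + 1) :=
      pow_le_pow_of_le_one (norm_nonneg _) hp1 (by nlinarith)

theorem IsPsi.norm_sub_sum_inv_pow_mul_le [CompleteSpace K] {f : ℕ} (hp : 2 ≤ p) (hf : 0 < f)
    (hΨ : IsPsi p (p ^ f) Ψ) (hp0 : (p : K) ≠ 0) (hp1 : ‖(p : K)‖ < 1) {x : K} {n : ℕ}
    (hx : ‖(p : K) ^ n * x‖ ≤ 1) {c : ℕ → K} (hc : ∀ j ≤ n, c j ^ p ^ f = c j)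
    (hcx : ∀ j ≤ n, ‖c j - psiEval Ψ ((p : K) ^ j * x)‖ ≤ ‖(p : K)‖) :
    ‖x - ∑ j ∈ range (n + 1), ((p : K) ^ j)⁻¹ * c j‖ ≤ ‖(p : K)‖ := by
  have hq : 2 ≤ p ^ f := hp.trans (Nat.le_self_pow hf.ne' p)
  set b : ℕ → K := fun j => if j ∈ range (n + 1) then ((p : K) ^ j)⁻¹ * c j else 0 with hb
  have hbsum : HasSum b (∑ j ∈ range (n + 1), ((p : K) ^ j)⁻¹ * c j) := by
    rw [← sum_congr rfl fun j hj => if_pos hj]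
    exact hasSum_sum_of_ne_finset_zero fun j hj => if_neg hj
  rw [← ((hΨ.hasSum_psiEval hq hp0 hp1 x).sub hbsum).tsum_eq]
  refine IsUltrametricDist.norm_tsum_le_of_forall_le_of_nonneg (norm_nonneg _) fun j => ?_
  by_cases hj : j ≤ n
  · simp only [hb, mem_range, Nat.lt_succ_iff, hj, if_true]
    rw [← mul_sub]
    exact norm_inv_pow_mul_le (norm_pow_pow_sub_le_of_pow_eq_self hp hf hp1.le (hc j hj)
      (hcx j hj) j)
  · simp only [hb, mem_range, Nat.lt_succ_iff, hj, if_false, sub_zero]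
    refine norm_inv_pow_mul_le ?_
    obtain ⟨k, rfl⟩ : ∃ k, j = k + 1 + n := ⟨j - (n + 1), by omega⟩
    have hpx : ‖(p : K) ^ (k + 1 + n) * x‖ ≤ ‖(p : K)‖ := by
      rw [pow_add, mul_assoc, norm_mul, norm_pow]
      exact (mul_le_mul (pow_le_pow_of_le_one (norm_nonneg _) hp1.le (by omega : 1 ≤ k + 1)) hx
        (norm_nonneg _) (by positivity)).trans_eq (by rw [pow_one, mul_one])
    rw [norm_pow]
    calc ‖psiEval Ψ ((p : K) ^ (k + 1 + n) * x)‖ ^ (p ^ f) ^ (k + 1 + n)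
        ≤ ‖(p : K)‖ ^ (p ^ f) ^ (k + 1 + n) := by
          gcongr
          exact (norm_psiEval_le hΨ.1 (hpx.trans hp1.le)).trans hpx
      _ ≤ ‖(p : K)‖ ^ (k + 1 + n + 1) :=
          pow_le_pow_of_le_one (norm_nonneg _) hp1.le
            ((Nat.lt_pow_self (by omega)).trans_le (Nat.pow_le_pow_left hq _))

theorem IsPsi.norm_sub_sum_pow_mul_le [CompleteSpace K] {f : ℕ} (hp : 2 ≤ p) (hf : 0 < f)
    (hΨ : IsPsi p (p ^ f) Ψ) (hp0 : (p : K) ≠ 0) (hp1 : ‖(p : K)‖ < 1) {x : K} (hx : ‖x‖ ≤ 1)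
    {e : ℕ → K} (he : ∀ i, e i ^ p ^ f = e i)
    (hex : ∀ i, ‖e i - psiEval Ψ (((p : K) ^ i)⁻¹ * x)‖ ≤ ‖(p : K)‖) (n : ℕ) :
    ‖x - ∑ i ∈ range n, (p : K) ^ i * e i‖ ≤ ‖(p : K)‖ ^ n := by
  rcases n with _ | n
  · simpa using hx
  have hpn : (p : K) ^ n ≠ 0 := pow_ne_zero n hp0
  have hpow {j : ℕ} (hj : j ≤ n) : (p : K) ^ (n - j) = (p : K) ^ n * ((p : K) ^ j)⁻¹ :=
    pow_sub₀ _ hp0 hj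
  have key := hΨ.norm_sub_sum_inv_pow_mul_le hp hf hp0 hp1 (x := ((p : K) ^ n)⁻¹ * x)
    (c := fun j => e (n - j)) (by rwa [mul_inv_cancel_left₀ hpn]) (fun j _ => he _)
    fun j hj => by
      have := hex (n - j)
      rwa [hpow hj, mul_inv_rev, inv_inv, mul_assoc] at this
  have hreflect : x - ∑ i ∈ range (n + 1), (p : K) ^ i * e i
      = (p : K) ^ n * (((p : K) ^ n)⁻¹ * x - ∑ j ∈ range (n + 1), ((p : K) ^ j)⁻¹ * e (n - j)) := by
    rw [mul_sub, mul_inv_cancel_left₀ hpn, mul_sum, ← sum_range_reflect]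
    refine congrArg _ (sum_congr rfl fun j hj => ?_)
    rw [mem_range] at hj
    rw [show n + 1 - 1 - j = n - j by omega, hpow (by omega), mul_assoc]
  rw [hreflect, norm_mul, norm_pow, pow_succ]
  exact mul_le_mul_of_nonneg_left key (by positivity)

end Analysis

theorem psi_teichmuller_digits_general (p f : ℕ) (hp : p.Prime) (hf : 0 < f)
    (q : ℕ) (hq : q = p ^ f)
    (Ψ : PowerSeries ℤ) (hΨ : IsPsi p q Ψ)
    (K : Type) [NormedField K] [CompleteSpace K] (hna : IsUltrametricDist K)
    (hpK : ‖(p : K)‖ = (p : ℝ)⁻¹)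
    (a : K) (d : ℤ → K)
    (hteich : ∀ i : ℤ, (d i) ^ q = d i)
    (hdigit : ∀ i : ℤ, ‖d i - psiEval Ψ ((p : K) ^ (-i) * a)‖ ≤ (p : ℝ)⁻¹) :
    ∀ N : ℕ, ‖a‖ ≤ (p : ℝ) ^ (N : ℤ) →
      Tendsto (fun n : ℕ => ∑ i ∈ Finset.range n, (p : K) ^ ((i : ℤ) - (N : ℤ)) * d ((i : ℤ) - N))
        atTop (nhds a) := by
  intro N ha
  subst hq
  rw [← hpK] at hdigit
  have hpR : (0 : ℝ) < p := by exact_mod_cast hp.pos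
  have hp1 : ‖(p : K)‖ < 1 := hpK ▸ inv_lt_one_of_one_lt₀ (by exact_mod_cast hp.one_lt)
  have hp0 : (p : K) ≠ 0 := norm_pos_iff.mp (hpK ▸ inv_pos.mpr hpR)
  have hpN : ‖(p : K) ^ N * a‖ ≤ 1 := by
    rwa [norm_mul, norm_pow, hpK, inv_pow, ← zpow_natCast, inv_mul_le_one₀ (zpow_pos hpR _)]
  have hzpow (i : ℕ) : (p : K) ^ N * (p : K) ^ ((i : ℤ) - N) = (p : K) ^ i := by
    rw [← zpow_natCast, ← zpow_add₀ hp0, add_sub_cancel, zpow_natCast]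
  have key := hΨ.norm_sub_sum_pow_mul_le hp.two_le hf hp0 hp1 hpN (e := fun i => d (i - N))
    (fun i => hteich _) fun i => by
      rw [← mul_assoc, ← hzpow i, mul_inv_rev, inv_mul_cancel_right₀ (pow_ne_zero N hp0),
        ← zpow_neg]
      exact hdigit _
  rw [tendsto_iff_norm_sub_tendsto_zero]
  refine squeeze_zero (fun _ => norm_nonneg _) (fun n => ?_) (by simpa using
    (tendsto_pow_atTop_nhds_zero_of_lt_one (norm_nonneg _) hp1).const_mul (‖(p : K)‖ ^ N)⁻¹)
  rw [norm_sub_rev, le_inv_mul_iff₀ (pow_pos (norm_pos_iff.mpr hp0) N), ← norm_pow, ← norm_mul,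
    mul_sub, mul_sum]
  simpa only [← mul_assoc, hzpow] using key n

/-- for `a ∈ ℚ_q`, if `a_i ∈ 𝔽_q` is the reduction mod `p` of
`Ψ_q(p^{-i} a) ∈ ℤ_q`, then `a = ∑_{i ≫ -∞} [a_i] p^i` with `[·]` the Teichmüller lift.
Here `ℚ_q` is modelled as a complete nonarchimedean normed field `K` with `‖p‖ = p⁻¹`,
value group `p^ℤ` and residue field contained in `𝔽_q`; the Teichmüller lift `[a_i]` is
the element `d i ∈ K` with `(d i)^q = d i` reducing to `a_i` mod `p`, i.e.
`‖d i - Ψ_q(p^{-i}a)‖ ≤ p⁻¹`; and the expansion means that for `N` with `-v_p(a) ≤ N`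
(i.e. `‖a‖ ≤ p^N`, the digits `d i` for `i < -N` being automatically `0`), the partial
sums `∑_{-N ≤ i < n-N} d i · p^i` converge to `a`. -/
theorem psi_teichmuller_digits (p f : ℕ) (hp : p.Prime) (hf : 0 < f)
    (q : ℕ) (hq : q = p ^ f)
    (Ψ : PowerSeries ℤ) (hΨ : IsPsi p q Ψ)
    (K : Type) [NormedField K] [CompleteSpace K] (hna : IsUltrametricDist K)
    (hpK : ‖(p : K)‖ = (p : ℝ)⁻¹)
    (hdisc : ∀ x : K, x ≠ 0 → ∃ m : ℤ, ‖x‖ = (p : ℝ) ^ m)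
    (hres : ∀ x : K, ‖x‖ ≤ 1 → ‖x ^ q - x‖ ≤ (p : ℝ)⁻¹)
    (a : K) (d : ℤ → K)
    (hteich : ∀ i : ℤ, (d i) ^ q = d i)
    (hdigit : ∀ i : ℤ, ‖d i - psiEval Ψ ((p : K) ^ (-i) * a)‖ ≤ (p : ℝ)⁻¹) :
    ∀ N : ℕ, ‖a‖ ≤ (p : ℝ) ^ (N : ℤ) →
      Tendsto (fun n : ℕ => ∑ i ∈ Finset.range n, (p : K) ^ ((i : ℤ) - (N : ℤ)) * d ((i : ℤ) - N))
        atTop (nhds a) :=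
  psi_teichmuller_digits_general p f hp hf q hq Ψ hΨ K hna hpK a d hteich hdigit
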